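/- Let a,b>0, p>6, h≥0 a potential. There exists a constant σ>0, independent of λ, such that for every λ>0 and every u∈M_λ one has ‖u‖_{H¹}≥σ, where ‖u‖²_{H¹}=∑_x(|∇u|²(x)+u(x)²); in particular each of u⁺ and u⁻ satisfies ‖u^±‖_{H¹}≥σ/2. -/
import Mathlib


open scoped BigOperators
open Filter

namespace DiscreteKirchhoff

/-- Vertices of the lattice graph ℤ³. -/
abbrev V := Fin 3 → ℤ

/-- Adjacency on ℤ³: x ∼ y iff ∑ᵢ |xᵢ - yᵢ| = 1. -/
def adj (x y : V) : Prop := (∑ i, |x i - y i|) = 1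

instance (x y : V) : Decidable (adj x y) :=
  inferInstanceAs (Decidable ((∑ i, |x i - y i|) = 1))

/-- Graph Laplacian: Δu(x) = ∑_{y∼x} (u(y) - u(x)). -/
noncomputable def lap (u : V → ℝ) (x : V) : ℝ :=
  ∑' y : V, if adj x y then u y - u x else 0

/-- Gradient form: ∇u∇v(x) = (1/2) ∑_{y∼x} (u(y)-u(x))(v(y)-v(x)). -/
noncomputable def gradForm (u v : V → ℝ) (x : V) : ℝ :=
  (1/2) * ∑' y : V, if adj x y then (u y - u x) * (v y - v x) else 0

/-- |∇u|²(x). -/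
noncomputable def gradSq (u : V → ℝ) (x : V) : ℝ := gradForm u u x

/-- Positive part u⁺ = max(u,0). -/
noncomputable def pos (u : V → ℝ) : V → ℝ := fun x => max (u x) 0

/-- Negative part u⁻ = min(u,0). -/
noncomputable def neg (u : V → ℝ) : V → ℝ := fun x => min (u x) 0

/-- K_V(u) = ∑_x ∑_{y∼x} [u⁺(x)u⁻(y) + u⁻(x)u⁺(y)]. -/
noncomputable def KV (u : V → ℝ) : ℝ :=
  ∑' x : V, ∑' y : V, if adj x y then pos u x * neg u y + neg u x * pos u y else 0

/-- |t|^p log t², taken to be 0 at t = 0. -/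
noncomputable def logTerm (p t : ℝ) : ℝ :=
  if t = 0 then 0 else |t| ^ p * Real.log (t ^ 2)

/-- |t|^{p-2} t log t², taken to be 0 at t = 0. -/
noncomputable def nlTerm (p t : ℝ) : ℝ :=
  if t = 0 then 0 else |t| ^ (p - 2) * t * Real.log (t ^ 2)

/-- Membership in the space ℋ_λ (independent of λ > 0). -/
def memH (h u : V → ℝ) : Prop :=
  Summable (fun x => gradSq u x + (u x) ^ 2) ∧ Summable (fun x => h x * (u x) ^ 2)

/-- h_λ(x) = λ h(x) + 1. -/
noncomputable def hl (lam : ℝ) (h : V → ℝ) (x : V) : ℝ := lam * h x + 1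

/-- Squared norm in ℋ_λ. -/
noncomputable def normHlamSq (a lam : ℝ) (h u : V → ℝ) : ℝ :=
  ∑' x : V, (a * gradSq u x + hl lam h x * (u x) ^ 2)

/-- Squared H¹ norm. -/
noncomputable def normH1Sq (u : V → ℝ) : ℝ :=
  ∑' x : V, (gradSq u x + (u x) ^ 2)

/-- Inner product in ℋ_λ. -/
noncomputable def innerHlam (a lam : ℝ) (h u v : V → ℝ) : ℝ :=
  ∑' x : V, (a * gradForm u v x + hl lam h x * u x * v x)

/-- The energy functional J_λ. -/
noncomputable def Jlam (a b p lam : ℝ) (h u : V → ℝ) : ℝ :=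
  (1/2) * normHlamSq a lam h u
  + (b/4) * (∑' x : V, gradSq u x) ^ 2
  + (2/p^2) * ∑' x : V, |u x| ^ p
  - (1/p) * ∑' x : V, logTerm p (u x)

/-- The pairing (J′_λ(u), φ). -/
noncomputable def Jp (a b p lam : ℝ) (h u φ : V → ℝ) : ℝ :=
  (∑' x : V, (a * gradForm u φ x + hl lam h x * u x * φ x))
  + b * (∑' x : V, gradSq u x) * (∑' x : V, gradForm u φ x)
  - ∑' x : V, nlTerm p (u x) * φ x

/-- The Nehari manifold N_λ. -/
def NSet (a b p lam : ℝ) (h : V → ℝ) : Set (V → ℝ) :=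
  {u | memH h u ∧ u ≠ 0 ∧ Jp a b p lam h u u = 0}

/-- The sign-changing Nehari set M_λ. -/
def MSet (a b p lam : ℝ) (h : V → ℝ) : Set (V → ℝ) :=
  {u | memH h u ∧ pos u ≠ 0 ∧ neg u ≠ 0 ∧
       Jp a b p lam h u (pos u) = 0 ∧ Jp a b p lam h u (neg u) = 0}

/-- c_λ = inf_{N_λ} J_λ. -/
noncomputable def cLam (a b p lam : ℝ) (h : V → ℝ) : ℝ :=
  sInf (Jlam a b p lam h '' NSet a b p lam h)

/-- m_λ = inf_{M_λ} J_λ. -/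
noncomputable def mLam (a b p lam : ℝ) (h : V → ℝ) : ℝ :=
  sInf (Jlam a b p lam h '' MSet a b p lam h)

/-- Graph-connectedness of a subset of ℤ³. -/
def connectedIn (S : Set V) : Prop :=
  ∀ x ∈ S, ∀ y ∈ S, Relation.ReflTransGen (fun z w => adj z w ∧ w ∈ S) x y

/-- Hypothesis (h₁): h ≥ 0 and Ω = {h = 0} is nonempty, connected and finite. -/
def hypH1 (h : V → ℝ) : Prop :=
  (∀ x, 0 ≤ h x) ∧ {x | h x = 0}.Nonempty ∧ connectedIn {x | h x = 0} ∧ {x | h x = 0}.Finite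

/-- Hypothesis (h₂): the sublevel set {h < M} is finite for some M > 0. -/
def hypH2 (h : V → ℝ) : Prop :=
  ∃ M > 0, {x | h x < M}.Finite

/-- u solves the discrete logarithmic Kirchhoff equation pointwise on ℤ³. -/
def solvesEq (a b p lam : ℝ) (h u : V → ℝ) : Prop :=
  ∀ x : V, -(a + b * ∑' y : V, gradSq u y) * lap u x + hl lam h x * u x = nlTerm p (u x)

/-- Vertex boundary of a subset of ℤ³. -/
def bdry (S : Set V) : Set V := {y | y ∉ S ∧ ∃ x ∈ S, adj x y}

/-- ℋ¹₀(Ω): functions vanishing outside Ω. -/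
def H10 (S : Set V) : Set (V → ℝ) := {u | ∀ x, x ∉ S → u x = 0}

/-- The energy functional J_Ω. -/
noncomputable def JOm (a b p : ℝ) (S : Set V) (u : V → ℝ) : ℝ :=
  (1/2) * ∑' x : V, (S ∪ bdry S).indicator (fun x => a * gradSq u x) x
  + (1/2) * ∑' x : V, S.indicator (fun x => (u x) ^ 2) x
  + (b/4) * (∑' x : V, (S ∪ bdry S).indicator (gradSq u) x) ^ 2
  + (2/p^2) * ∑' x : V, S.indicator (fun x => |u x| ^ p) x
  - (1/p) * ∑' x : V, S.indicator (fun x => logTerm p (u x)) x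

/-- The pairing (J′_Ω(u), φ). -/
noncomputable def JOmp (a b p : ℝ) (S : Set V) (u φ : V → ℝ) : ℝ :=
  (∑' x : V, (S ∪ bdry S).indicator (fun x => a * gradForm u φ x) x)
  + (∑' x : V, S.indicator (fun x => u x * φ x) x)
  + b * (∑' x : V, (S ∪ bdry S).indicator (gradSq u) x)
      * (∑' x : V, (S ∪ bdry S).indicator (gradForm u φ) x)
  - ∑' x : V, S.indicator (fun x => nlTerm p (u x) * φ x) x

/-- The Nehari manifold N_Ω. -/
def NOm (a b p : ℝ) (S : Set V) : Set (V → ℝ) :=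
  {u | u ∈ H10 S ∧ u ≠ 0 ∧ JOmp a b p S u u = 0}

/-- The sign-changing Nehari set M_Ω. -/
def MOm (a b p : ℝ) (S : Set V) : Set (V → ℝ) :=
  {u | u ∈ H10 S ∧ pos u ≠ 0 ∧ neg u ≠ 0 ∧
       JOmp a b p S u (pos u) = 0 ∧ JOmp a b p S u (neg u) = 0}

/-- c_Ω. -/
noncomputable def cOm (a b p : ℝ) (S : Set V) : ℝ :=
  sInf (JOm a b p S '' NOm a b p S)

/-- m_Ω. -/
noncomputable def mOm (a b p : ℝ) (S : Set V) : ℝ :=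
  sInf (JOm a b p S '' MOm a b p S)

/-- u solves the limiting equation pointwise on Ω. -/
def solvesEqOm (a b p : ℝ) (S : Set V) (u : V → ℝ) : Prop :=
  ∀ x ∈ S, -(a + b * ∑' y : V, (S ∪ bdry S).indicator (gradSq u) y) * lap u x + u x
      = nlTerm p (u x)



-- ===== auxiliary lemmas =====

def neighFinset (x : V) : Finset V :=
  Fintype.piFinset fun i => ({x i - 1, x i, x i + 1} : Finset ℤ)

lemma adj_mem_neigh {x y : V} (hxy : adj x y) : y ∈ neighFinset x := by
  have h1 : ∀ i, |x i - y i| ≤ 1 := by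
    intro i
    have h2 := Finset.single_le_sum (f := fun j => |x j - y j|)
      (fun j _ => abs_nonneg _) (Finset.mem_univ i)
    rw [adj] at hxy
    omega
  simp only [neighFinset, Fintype.mem_piFinset, Finset.mem_insert, Finset.mem_singleton]
  intro i
  have := h1 i
  rw [abs_le] at this
  omega

lemma summable_adjSupport (x : V) (g : V → ℝ) (hg : ∀ y, ¬ adj x y → g y = 0) :
    Summable g :=
  summable_of_ne_finset_zero (s := neighFinset x)
    (fun y hy => hg y (fun ha => hy (adj_mem_neigh ha)))

lemma PN_nonneg (s t : ℝ) : 0 ≤ (max t 0 - max s 0) * (min t 0 - min s 0) := by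
  rcases le_total t 0 with ht | ht <;> rcases le_total s 0 with hs | hs <;>
    simp [max_eq_right, max_eq_left, min_eq_left, min_eq_right, ht, hs] <;> nlinarith

lemma N_mono (s t : ℝ) : 0 ≤ (min t 0 - min s 0) * (t - s) := by
  rcases le_total t 0 with ht | ht <;> rcases le_total s 0 with hs | hs <;>
    simp [min_eq_left, min_eq_right, ht, hs] <;> nlinarith

lemma max_min_split (t : ℝ) : max t 0 + min t 0 = t := by
  rw [max_add_min]; ring

lemma gradSq_nonneg (u : V → ℝ) (x : V) : 0 ≤ gradSq u x := by
  unfold gradSq gradForm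
  have h : 0 ≤ ∑' y : V, if adj x y then (u y - u x) * (u y - u x) else 0 :=
    tsum_nonneg fun y => by split <;> nlinarith
  linarith

lemma tsum_adj_le (x : V) (f g : V → ℝ)
    (hfg : ∀ y, adj x y → f y ≤ g y) :
    (∑' y : V, if adj x y then f y else 0) ≤ (∑' y : V, if adj x y then g y else 0) := by
  refine Summable.tsum_le_tsum (fun y => ?_) (summable_adjSupport x _ (fun y hy => if_neg hy))
    (summable_adjSupport x _ (fun y hy => if_neg hy))
  by_cases hy : adj x y
  · simpa [hy] using hfg y hy
  · simp [hy]

lemma split_e (s t : ℝ) : t - s = (max t 0 - max s 0) + (min t 0 - min s 0) := by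
  have h1 : max t 0 + min t 0 = t := by rw [max_add_min]; ring
  have h2 : max s 0 + min s 0 = s := by rw [max_add_min]; ring
  linarith

lemma pos_ineq1 (s t : ℝ) : 0 ≤ (t - s) * (max t 0 - max s 0) := by
  have hP := PN_nonneg s t
  rw [split_e s t]
  nlinarith [sq_nonneg (max t 0 - max s 0)]

lemma pos_ineq2 (s t : ℝ) : (t - s) * (max t 0 - max s 0) ≤ (t - s) * (t - s) := by
  have hN := N_mono s t
  rw [split_e s t] at hN ⊢
  nlinarith

lemma pos_ineq3 (s t : ℝ) : (max t 0 - max s 0) * (max t 0 - max s 0) ≤ (t - s) * (t - s) := by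
  have hP := PN_nonneg s t
  rw [split_e s t]
  nlinarith [sq_nonneg (min t 0 - min s 0)]

lemma gradForm_pos_nonneg (u : V → ℝ) (x : V) : 0 ≤ gradForm u (pos u) x := by
  unfold gradForm
  have h : 0 ≤ ∑' y : V, if adj x y then (u y - u x) * (pos u y - pos u x) else 0 := by
    refine tsum_nonneg fun y => ?_
    split
    · simpa [pos] using pos_ineq1 (u x) (u y)
    · exact le_refl _
  linarith

lemma gradForm_pos_le_gradSq (u : V → ℝ) (x : V) : gradForm u (pos u) x ≤ gradSq u x := by
  unfold gradSq gradForm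
  have h := tsum_adj_le x (fun y => (u y - u x) * (pos u y - pos u x))
    (fun y => (u y - u x) * (u y - u x)) (fun y _ => by
      simpa [pos] using pos_ineq2 (u x) (u y))
  linarith

lemma gradSq_pos_le (u : V → ℝ) (x : V) : gradSq (pos u) x ≤ gradSq u x := by
  unfold gradSq gradForm
  have h := tsum_adj_le x (fun y => (pos u y - pos u x) * (pos u y - pos u x))
    (fun y => (u y - u x) * (u y - u x)) (fun y _ => by
      simpa [pos] using pos_ineq3 (u x) (u y))
  linarith


lemma u_mul_pos (u : V → ℝ) (x : V) : u x * pos u x = (pos u x)^2 := by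
  unfold pos
  rcases le_total (u x) 0 with hx | hx
  · simp [max_eq_right hx]
  · rw [max_eq_left hx]; ring

lemma pos_sq_le (u : V → ℝ) (x : V) : (pos u x)^2 ≤ (u x)^2 := by
  unfold pos
  rcases le_total (u x) 0 with hx | hx
  · simp [max_eq_right hx, sq_nonneg]
  · rw [max_eq_left hx]

lemma key (a b p lam : ℝ) (ha : 0 < a) (hb : 0 < b) (h : V → ℝ)
    (hh : ∀ x, 0 ≤ h x) (hlam : 0 < lam) (u : V → ℝ) (hmem : memH h u)
    (hpos : pos u ≠ 0) (hJ : Jp a b p lam h u (pos u) = 0) :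
    Summable (fun x => gradSq (pos u) x + (pos u x)^2) ∧
    Summable (fun x => (pos u x)^2) ∧
    1 ≤ ∑' x : V, (pos u x)^2 := by
  have Sgu2 := hmem.1
  have Sg : Summable (fun x => gradSq u x) :=
    Summable.of_nonneg_of_le (fun x => gradSq_nonneg u x)
      (fun x => le_add_of_nonneg_right (sq_nonneg _)) Sgu2
  have Su2 : Summable (fun x => (u x)^2) :=
    Summable.of_nonneg_of_le (fun x => sq_nonneg _)
      (fun x => le_add_of_nonneg_left (gradSq_nonneg u x)) Sgu2
  have Sp2 : Summable (fun x => (pos u x)^2) :=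
    Summable.of_nonneg_of_le (fun x => sq_nonneg _) (fun x => pos_sq_le u x) Su2
  have Sgp : Summable (fun x => gradSq (pos u) x) :=
    Summable.of_nonneg_of_le (fun x => gradSq_nonneg (pos u) x)
      (fun x => gradSq_pos_le u x) Sg
  have SgF : Summable (fun x => gradForm u (pos u) x) :=
    Summable.of_nonneg_of_le (fun x => gradForm_pos_nonneg u x)
      (fun x => gradForm_pos_le_gradSq u x) Sg
  have Shp2 : Summable (fun x => h x * (pos u x)^2) :=
    Summable.of_nonneg_of_le (fun x => mul_nonneg (hh x) (sq_nonneg _))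
      (fun x => mul_le_mul_of_nonneg_left (pos_sq_le u x) (hh x)) hmem.2
  refine ⟨Sgp.add Sp2, Sp2, ?_⟩
  by_contra hcon
  push_neg at hcon
  have hsmall : ∀ x, (pos u x)^2 < 1 := fun x =>
    lt_of_le_of_lt (Summable.le_tsum Sp2 x (fun y _ => sq_nonneg _)) hcon
  have hnl : ∀ x, nlTerm p (u x) * pos u x ≤ 0 := by
    intro x
    rcases le_or_gt (u x) 0 with hx | hx
    · simp [pos, max_eq_right hx]
    · have hpx : pos u x = u x := max_eq_left hx.le
      have hlt : (u x)^2 < 1 := by rw [← sq_abs]; rw [← hpx] at *; simpa [pos, sq_abs] using hsmall x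
      unfold nlTerm
      rw [if_neg hx.ne']
      have hlog : Real.log ((u x)^2) ≤ 0 := Real.log_nonpos (sq_nonneg _) hlt.le
      have hnn : 0 ≤ |u x| ^ (p-2) * u x * pos u x :=
        mul_nonneg (mul_nonneg (Real.rpow_nonneg (abs_nonneg _) _) hx.le)
          (le_max_right _ _)
      have h0 : |u x| ^ (p-2) * u x * Real.log ((u x)^2) * pos u x
          = (|u x| ^ (p-2) * u x * pos u x) * Real.log ((u x)^2) := by ring
      calc |u x| ^ (p-2) * u x * Real.log ((u x)^2) * pos u x
          = (|u x| ^ (p-2) * u x * pos u x) * Real.log ((u x)^2) := h0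
        _ ≤ 0 := mul_nonpos_of_nonneg_of_nonpos hnn hlog
  have hT4 : (∑' x : V, nlTerm p (u x) * pos u x) ≤ 0 := tsum_nonpos hnl
  have hT1eq : (∑' x : V, (a * gradForm u (pos u) x + hl lam h x * u x * pos u x))
      = ∑' x : V, (a * gradForm u (pos u) x + (lam * (h x * (pos u x)^2) + (pos u x)^2)) := by
    refine tsum_congr fun x => ?_
    have h1 := u_mul_pos u x
    simp only [hl]
    rw [mul_assoc, h1]
    ring
  have ST1 : Summable (fun x => a * gradForm u (pos u) x
      + (lam * (h x * (pos u x)^2) + (pos u x)^2)) :=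
    (SgF.mul_left a).add ((Shp2.mul_left lam).add Sp2)
  have hT1ge : (∑' x : V, (pos u x)^2)
      ≤ ∑' x : V, (a * gradForm u (pos u) x + (lam * (h x * (pos u x)^2) + (pos u x)^2)) := by
    refine Summable.tsum_le_tsum (fun x => ?_) Sp2 ST1
    have h2 := mul_nonneg ha.le (gradForm_pos_nonneg u x)
    have h3 := mul_nonneg hlam.le (mul_nonneg (hh x) (sq_nonneg (pos u x)))
    linarith
  have hK : 0 ≤ b * (∑' x : V, gradSq u x) * (∑' x : V, gradForm u (pos u) x) :=
    mul_nonneg (mul_nonneg hb.le (tsum_nonneg (gradSq_nonneg u)))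
      (tsum_nonneg (gradForm_pos_nonneg u))
  unfold Jp at hJ
  rw [hT1eq] at hJ
  obtain ⟨x0, hx0⟩ : ∃ x, pos u x ≠ 0 := by
    by_contra hc; push_neg at hc; exact hpos (funext hc)
  have hx0' : 0 < (pos u x0)^2 := by positivity
  have hp2 : (pos u x0)^2 ≤ ∑' x : V, (pos u x)^2 :=
    Summable.le_tsum Sp2 x0 (fun y _ => sq_nonneg _)
  linarith


lemma gradSq_neg_fun (v : V → ℝ) (x : V) : gradSq (-v) x = gradSq v x := by
  unfold gradSq gradForm
  congr 1
  refine tsum_congr fun y => ?_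
  by_cases hy : adj x y <;> simp only [hy, if_true, if_false, Pi.neg_apply]
  ring

lemma memH_neg (h u : V → ℝ) (hm : memH h u) : memH h (-u) := by
  obtain ⟨h1, h2⟩ := hm
  constructor
  · have e : (fun x => gradSq (-u) x + ((-u) x)^2) = fun x => gradSq u x + (u x)^2 :=
      funext fun x => by rw [gradSq_neg_fun]; simp
    rw [e]; exact h1
  · have e : (fun x => h x * ((-u) x)^2) = fun x => h x * (u x)^2 :=
      funext fun x => by simp
    rw [e]; exact h2

lemma pos_neg_apply (u : V → ℝ) (x : V) : pos (-u) x = - neg u x := by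
  have := max_neg_neg (u x) (0:ℝ)
  simpa [pos, neg] using this

lemma nlTerm_neg (p t : ℝ) : nlTerm p (-t) = - nlTerm p t := by
  unfold nlTerm
  by_cases ht : t = 0
  · simp [ht]
  · rw [if_neg (neg_ne_zero.mpr ht), if_neg ht, abs_neg, neg_sq]; ring

lemma Jp_neg (a b p lam : ℝ) (h u : V → ℝ) :
    Jp a b p lam h (-u) (pos (-u)) = Jp a b p lam h u (neg u) := by
  unfold Jp
  have e1 : ∀ x, gradForm (-u) (pos (-u)) x = gradForm u (neg u) x := by
    intro x
    unfold gradForm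
    congr 1
    refine tsum_congr fun y => ?_
    by_cases hy : adj x y <;>
      simp only [hy, if_true, if_false, Pi.neg_apply, pos_neg_apply]
    ring
  have e3 : ∀ x, hl lam h x * (-u) x * pos (-u) x = hl lam h x * u x * neg u x := by
    intro x
    rw [pos_neg_apply]
    simp only [Pi.neg_apply]
    ring
  have e4 : ∀ x, nlTerm p ((-u) x) * pos (-u) x = nlTerm p (u x) * neg u x := by
    intro x
    rw [pos_neg_apply]
    simp only [Pi.neg_apply]
    rw [nlTerm_neg]
    ring
  rw [tsum_congr fun x => by rw [e1 x, e3 x], tsum_congr (gradSq_neg_fun u),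
    tsum_congr e1, tsum_congr e4]



/-- uniform lower bound of the H¹ norm on M_λ, independent of λ. -/
theorem stmt17 (a b p : ℝ) (ha : 0 < a) (hb : 0 < b) (hp : 6 < p)
    (h : V → ℝ) (hh : ∀ x, 0 ≤ h x) :
    ∃ σ > (0:ℝ), ∀ lam : ℝ, 0 < lam → ∀ u ∈ MSet a b p lam h,
      σ ≤ Real.sqrt (normH1Sq u) ∧
      σ / 2 ≤ Real.sqrt (normH1Sq (pos u)) ∧
      σ / 2 ≤ Real.sqrt (normH1Sq (neg u)) := by
  refine ⟨Real.sqrt 2, Real.sqrt_pos.mpr (by norm_num), ?_⟩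
  intro lam hlam u hu
  obtain ⟨hmem, hp0, hn0, hJP, hJN⟩ := hu
  obtain ⟨SgpP, SP2, hP1⟩ := key a b p lam ha hb h hh hlam u hmem hp0 hJP
  -- negative part via -u
  have hmemN : memH h (-u) := memH_neg h u hmem
  have hposN : pos (-u) ≠ 0 := by
    intro hc
    apply hn0
    funext x
    have := congrFun hc x
    rw [pos_neg_apply] at this
    simpa using this
  have hJN' : Jp a b p lam h (-u) (pos (-u)) = 0 := by rw [Jp_neg]; exact hJN
  obtain ⟨SgpN', SN2', hN1'⟩ := key a b p lam ha hb h hh hlam (-u) hmemN hposN hJN'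
  have epos : (fun x => ((pos (-u)) x)^2) = fun x => (neg u x)^2 :=
    funext fun x => by rw [pos_neg_apply]; ring
  have SN2 : Summable (fun x => (neg u x)^2) := by rwa [epos] at SN2'
  have hN1 : 1 ≤ ∑' x : V, (neg u x)^2 := by rwa [epos] at hN1'
  have egradN : (fun x => gradSq (pos (-u)) x + ((pos (-u)) x)^2)
      = fun x => gradSq (neg u) x + (neg u x)^2 := by
    funext x
    have e2 : pos (-u) = -(neg u) := funext fun y => pos_neg_apply u y
    rw [e2, gradSq_neg_fun]
    simp
  have SgpN : Summable (fun x => gradSq (neg u) x + (neg u x)^2) := by rwa [egradN] at SgpN'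
  -- summabilities for u
  have Sgu2 := hmem.1
  have Su2 : Summable (fun x => (u x)^2) :=
    Summable.of_nonneg_of_le (fun x => sq_nonneg _)
      (fun x => le_add_of_nonneg_left (gradSq_nonneg u x)) Sgu2
  -- split u^2
  have hsplit : (fun x => (u x)^2) = fun x => (pos u x)^2 + (neg u x)^2 := by
    funext x
    unfold pos neg
    rcases le_total (u x) 0 with hx | hx
    · rw [max_eq_right hx, min_eq_left hx]; ring
    · rw [max_eq_left hx, min_eq_right hx]; ring
  have htu2 : (∑' x : V, (u x)^2) = (∑' x : V, (pos u x)^2) + ∑' x : V, (neg u x)^2 := by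
    rw [hsplit]
    exact Summable.tsum_add SP2 SN2
  have h2le : 2 ≤ ∑' x : V, (u x)^2 := by rw [htu2]; linarith
  have hH1u : 2 ≤ normH1Sq u := by
    have hle : (∑' x : V, (u x)^2) ≤ normH1Sq u := by
      refine Summable.tsum_le_tsum (fun x => le_add_of_nonneg_left (gradSq_nonneg u x)) Su2 Sgu2
    linarith
  have hH1p : 1 ≤ normH1Sq (pos u) := by
    have hle : (∑' x : V, (pos u x)^2) ≤ normH1Sq (pos u) :=
      Summable.tsum_le_tsum (fun x => le_add_of_nonneg_left (gradSq_nonneg (pos u) x)) SP2 SgpP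
    linarith
  have hH1n : 1 ≤ normH1Sq (neg u) := by
    have hle : (∑' x : V, (neg u x)^2) ≤ normH1Sq (neg u) :=
      Summable.tsum_le_tsum (fun x => le_add_of_nonneg_left (gradSq_nonneg (neg u) x)) SN2 SgpN
    linarith
  have hs2 : Real.sqrt 2 ≤ 2 := by
    nlinarith [Real.sq_sqrt (by norm_num : (0:ℝ) ≤ 2), Real.sqrt_nonneg 2]
  have half : ∀ X : ℝ, 1 ≤ X → Real.sqrt 2 / 2 ≤ Real.sqrt X := by
    intro X hX
    have h1 : (1:ℝ) = Real.sqrt 1 := Real.sqrt_one.symm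
    have := Real.sqrt_le_sqrt hX
    rw [← h1] at this
    linarith
  refine ⟨?_, half _ hH1p, half _ hH1n⟩
  calc Real.sqrt 2 ≤ Real.sqrt (normH1Sq u) := Real.sqrt_le_sqrt hH1u

end DiscreteKirchhoff
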